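/- arXiv:2212.14636 — 4 statements merged into one kernel-verified Lean document; each statement's English description precedes it below -/
import Mathlib

section
/- Let X ⊆ [n] and suppose X is c-bad for a family F, i.e. sup_{I∈F} μ_I(X ∩ I) < c, where for each I ∈ F the weights μ_I(i) ≥ 0 on i ∈ I satisfy Σ_{i∈I} μ_I(i) = 1. Then for every I ∈ F there exists a threshold ε ∈ [0,1) such that, setting Ĩ = {i ∈ I : μ_I(i) > ε} and j = |Ĩ|, one has |Ĩ ∩ X| < c·|Ĩ| (with Ĩ consisting of the j elements of I with largest weights). -/
/-!
Layer cake: weights in `[0, 1]` satisfy `μ_I(A) = ∫₀¹ #{i ∈ A | ε < μ_I(i)} dε`. Applied to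
`A = X ∩ I` and `A = I`, badness reads `∫₀¹ #(Ĩ_ε ∩ X) dε < c = ∫₀¹ c · #Ĩ_ε dε`, so the integrands
must compare the same way at some `ε ∈ (0, 1)`.
-/

open Finset MeasureTheory

theorem exists_lt_of_setIntegral_lt {α : Type*} [MeasurableSpace α] {μ : Measure α}
    {s : Set α} {f g : α → ℝ} (hs : MeasurableSet s) (hf : IntegrableOn f s μ)
    (hg : IntegrableOn g s μ) (h : ∫ x in s, f x ∂μ < ∫ x in s, g x ∂μ) :
    ∃ x ∈ s, f x < g x := by
  by_contra! hle
  exact h.not_ge (setIntegral_mono_on hg hf hs hle)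

theorem setIntegral_Ioo_zero_one_indicator_Iio {a : ℝ} (h₀ : 0 ≤ a) (h₁ : a ≤ 1) :
    ∫ ε in Set.Ioo 0 1, (Set.Iio a).indicator 1 ε = a := by
  rw [integral_indicator_one measurableSet_Iio, measureReal_restrict_apply measurableSet_Iio,
    Set.Iio_inter_Ioo, min_eq_left h₁, Real.volume_real_Ioo_of_le h₀, sub_zero]

theorem natCast_card_filter_lt {ι : Type*} (s : Finset ι) (a : ι → ℝ) (ε : ℝ) :
    (#{i ∈ s | ε < a i} : ℝ) = ∑ i ∈ s, (Set.Iio (a i)).indicator 1 ε := by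
  rw [natCast_card_filter]
  simp only [Set.indicator_apply, Set.mem_Iio, Pi.one_apply]

theorem integrableOn_Ioo_card_filter_lt {ι : Type*} (s : Finset ι) (a : ι → ℝ) :
    IntegrableOn (fun ε => (#{i ∈ s | ε < a i} : ℝ)) (Set.Ioo 0 1) := by
  simp_rw [natCast_card_filter_lt]
  exact integrable_finsetSum _ fun i _ => (integrable_const 1).indicator measurableSet_Iio

theorem setIntegral_Ioo_zero_one_card_filter_lt {ι : Type*} (s : Finset ι) {a : ι → ℝ}
    (h₀ : ∀ i ∈ s, 0 ≤ a i) (h₁ : ∀ i ∈ s, a i ≤ 1) :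
    ∫ ε in Set.Ioo 0 1, (#{i ∈ s | ε < a i} : ℝ) = ∑ i ∈ s, a i := by
  simp_rw [natCast_card_filter_lt]
  rw [integral_finsetSum _ fun i _ => (integrable_const 1).indicator measurableSet_Iio]
  exact sum_congr rfl fun i hi => setIntegral_Ioo_zero_one_indicator_Iio (h₀ i hi) (h₁ i hi)

theorem stmt2_general (n : ℕ) (F : Set (Finset (Fin n))) (μ : Finset (Fin n) → Fin n → ℝ)
    (hnn : ∀ I ∈ F, ∀ i ∈ I, 0 ≤ μ I i) (hsum : ∀ I ∈ F, ∑ i ∈ I, μ I i = 1)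
    (c : ℝ) (X : Finset (Fin n))
    (hbad : ∀ I ∈ F, ∑ i ∈ X ∩ I, μ I i < c) :
    ∀ I ∈ F, ∃ ε : ℝ, 0 ≤ ε ∧ ε < 1 ∧
      (((I.filter fun i => ε < μ I i) ∩ X).card : ℝ) <
        c * ((I.filter fun i => ε < μ I i).card : ℝ) := by
  intro I hI
  have hle : ∀ i ∈ I, μ I i ≤ 1 := fun i hi => hsum I hI ▸ single_le_sum (hnn I hI) hi
  obtain ⟨ε, hε, hlt⟩ := exists_lt_of_setIntegral_lt measurableSet_Ioo
    (integrableOn_Ioo_card_filter_lt (X ∩ I) (μ I))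
    ((integrableOn_Ioo_card_filter_lt I (μ I)).const_mul c) <| by
      rw [setIntegral_Ioo_zero_one_card_filter_lt _ (fun i hi => hnn I hI i (mem_inter.1 hi).2)
          fun i hi => hle i (mem_inter.1 hi).2,
        integral_const_mul, setIntegral_Ioo_zero_one_card_filter_lt I (hnn I hI) hle, hsum I hI,
        mul_one]
      exact hbad I hI
  exact ⟨ε, hε.1.le, hε.2, by rwa [filter_inter, inter_comm]⟩

theorem stmt2 (n : ℕ) (F : Set (Finset (Fin n))) (μ : Finset (Fin n) → Fin n → ℝ)
    (hnn : ∀ I ∈ F, ∀ i ∈ I, 0 ≤ μ I i) (hsum : ∀ I ∈ F, ∑ i ∈ I, μ I i = 1)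
    (c : ℝ) (hc : 0 < c) (X : Finset (Fin n))
    (hbad : ∀ I ∈ F, ∑ i ∈ X ∩ I, μ I i < c) :
    ∀ I ∈ F, ∃ ε : ℝ, 0 ≤ ε ∧ ε < 1 ∧
      (((I.filter fun i => ε < μ I i) ∩ X).card : ℝ) <
        c * ((I.filter fun i => ε < μ I i).card : ℝ) :=
  stmt2_general n F μ hnn hsum c X hbad
end

section
/- Let c ∈ (0,1), I a finite set with nonnegative weights μ(i), Σ_{i∈I} μ(i) = 1, and X a set with Σ_{i∈I∩X} μ(i) < c. Consider the continuous function φ(ε) = Σ_{i∈I∩X} min(μ(i), ε) − c·Σ_{i∈I} min(μ(i), ε) on [0,1]. Then φ(0) = 0, φ(1) < 0, and there exists a largest ε* ∈ [0,1) with φ(ε*) ≥ 0 such that φ(ε) < 0 for all ε > ε*; moreover for this ε*, the strict inequality Σ_{i∈I∩X} 1_{μ(i) > ε*} < c·Σ_{i∈I} 1_{μ(i) > ε*} holds. -/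
/-!
The map `ε ↦ ∑ min (μ i) ε` is continuous and piecewise linear, with slope `#{i | ε < μ i}` to
the right of `ε`. Since `φ ≥ 0` at `0` and `φ < 0` from `1` on, the set `{ε ∈ [0,1] | 0 ≤ φ ε}`
is compact and nonempty, and its maximum `ε*` is the required point. On a short interval
`[ε*, b]` containing no value of `μ`, `φ` is affine with slope `#{i ∈ I ∩ X | ε* < μ i} - c · #{i ∈ I | ε* < μ i}`;
as `φ` drops from `φ ε* ≥ 0` to `φ b < 0`, this slope is negative.
-/

open Finset

theorem exists_max_nonneg_of_continuous {f : ℝ → ℝ} (hf : Continuous f) {a b : ℝ}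
    (ha : 0 ≤ f a) (hb : ∀ x, b ≤ x → f x < 0) :
    ∃ e, a ≤ e ∧ e < b ∧ 0 ≤ f e ∧ ∀ x, e < x → f x < 0 := by
  have hab : a ≤ b := le_of_not_gt fun h => (hb a h.le).not_ge ha
  obtain ⟨e, ⟨⟨hae, heb⟩, hfe⟩, hmax⟩ :=
    (isCompact_Icc.inter_right (isClosed_Ici.preimage hf)).exists_isGreatest
      ⟨a, ⟨le_rfl, hab⟩, ha⟩
  refine ⟨e, hae, heb.lt_of_ne fun h => (hb e h.ge).not_ge hfe, hfe, fun x hex => ?_⟩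
  by_contra! hfx
  rcases le_or_gt x b with hxb | hbx
  · exact hex.not_ge (hmax ⟨⟨hae.trans hex.le, hxb⟩, hfx⟩)
  · exact (hb x hbx.le).not_ge hfx

namespace Finset

variable {ι : Type*} (s : Finset ι) (f : ι → ℝ)

theorem exists_gt_forall_lt_imp_le (a : ℝ) : ∃ b, a < b ∧ ∀ i ∈ s, a < f i → b ≤ f i := by
  classical
  set T := insert (a + 1) ((s.filter fun i => a < f i).image f)
  refine ⟨T.min' (insert_nonempty _ _), (T.lt_min'_iff _).2 ?_, fun i hi hai => ?_⟩
  · simp only [T, mem_insert, mem_image, mem_filter]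
    rintro y (rfl | ⟨j, ⟨-, hj⟩, rfl⟩) <;> linarith
  · exact T.min'_le _ (mem_insert_of_mem (mem_image_of_mem f (mem_filter.2 ⟨hi, hai⟩)))

theorem sum_min_eq_sum_of_le {ε : ℝ} (h : ∀ i ∈ s, f i ≤ ε) :
    ∑ i ∈ s, min (f i) ε = ∑ i ∈ s, f i :=
  sum_congr rfl fun i hi => min_eq_left (h i hi)

theorem sum_min_eq_add_card_mul {a b : ℝ} (hab : a ≤ b) (hgap : ∀ i ∈ s, a < f i → b ≤ f i) :
    ∑ i ∈ s, min (f i) b =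
      ∑ i ∈ s, min (f i) a + ((s.filter fun i => a < f i).card : ℝ) * (b - a) := by
  have hstep : ∀ i ∈ s, min (f i) b - min (f i) a = if a < f i then b - a else 0 := by
    intro i hi
    split_ifs with hai
    · rw [min_eq_right (hgap i hi hai), min_eq_right hai.le]
    · rw [not_lt] at hai
      rw [min_eq_left (hai.trans hab), min_eq_left hai, sub_self]
  have := sum_congr rfl hstep
  rw [sum_sub_distrib, ← sum_filter, sum_const, nsmul_eq_mul] at this
  linarith

end Finset

theorem stmt3_general {ι : Type*} [DecidableEq ι] (I : Finset ι) (μ : ι → ℝ)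
    (hnn : ∀ i ∈ I, 0 ≤ μ i) (hsum : ∑ i ∈ I, μ i = 1)
    (X : Finset ι) (c : ℝ)
    (hX : ∑ i ∈ I ∩ X, μ i < c)
    (φ : ℝ → ℝ)
    (hφ : ∀ ε, φ ε = ∑ i ∈ I ∩ X, min (μ i) ε - c * ∑ i ∈ I, min (μ i) ε) :
    φ 0 = 0 ∧ φ 1 < 0 ∧
      ∃ εstar : ℝ, 0 ≤ εstar ∧ εstar < 1 ∧ 0 ≤ φ εstar ∧
        (∀ ε, εstar < ε → φ ε < 0) ∧
        ((((I ∩ X).filter fun i => εstar < μ i).card : ℝ) <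
          c * ((I.filter fun i => εstar < μ i).card : ℝ)) := by
  have hXI : I ∩ X ⊆ I := inter_subset_left
  have hφ_zero : φ 0 = 0 := by
    have hmin : ∀ s ⊆ I, ∑ i ∈ s, min (μ i) 0 = 0 :=
      fun s hs => sum_eq_zero fun i hi => min_eq_right (hnn i (hs hi))
    rw [hφ, hmin _ hXI, hmin _ subset_rfl, mul_zero, sub_zero]
  have hφ_large : ∀ ε, 1 ≤ ε → φ ε < 0 := by
    intro ε hε
    have hμ : ∀ i ∈ I, μ i ≤ ε := fun i hi => (hsum ▸ single_le_sum hnn hi).trans hε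
    rw [hφ, sum_min_eq_sum_of_le _ _ fun i hi => hμ i (hXI hi), sum_min_eq_sum_of_le _ _ hμ, hsum]
    linarith
  have hφ_cont : Continuous φ := by
    rw [funext hφ]
    fun_prop
  obtain ⟨ε, hε0, hε1, hφε, hneg⟩ :=
    exists_max_nonneg_of_continuous hφ_cont hφ_zero.ge hφ_large
  refine ⟨hφ_zero, hφ_large 1 le_rfl, ε, hε0, hε1, hφε, hneg, ?_⟩
  obtain ⟨b, hεb, hgap⟩ := I.exists_gt_forall_lt_imp_le μ ε
  have hφb := hneg b hεb
  rw [hφ, sum_min_eq_add_card_mul _ _ hεb.le fun i hi => hgap i (hXI hi),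
    sum_min_eq_add_card_mul _ _ hεb.le hgap] at hφb
  rw [hφ] at hφε
  have hslope : ((((I ∩ X).filter fun i => ε < μ i).card : ℝ) -
      c * ((I.filter fun i => ε < μ i).card : ℝ)) * (b - ε) < 0 := by
    linarith
  linarith [neg_of_mul_neg_left hslope (sub_nonneg.2 hεb.le)]

theorem stmt3 {ι : Type*} [DecidableEq ι] (I : Finset ι) (μ : ι → ℝ)
    (hnn : ∀ i ∈ I, 0 ≤ μ i) (hsum : ∑ i ∈ I, μ i = 1)
    (X : Finset ι) (c : ℝ) (hc0 : 0 < c) (hc1 : c < 1)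
    (hX : ∑ i ∈ I ∩ X, μ i < c)
    (φ : ℝ → ℝ)
    (hφ : ∀ ε, φ ε = ∑ i ∈ I ∩ X, min (μ i) ε - c * ∑ i ∈ I, min (μ i) ε) :
    φ 0 = 0 ∧ φ 1 < 0 ∧
      ∃ εstar : ℝ, 0 ≤ εstar ∧ εstar < 1 ∧ 0 ≤ φ εstar ∧
        (∀ ε, εstar < ε → φ ε < 0) ∧
        ((((I ∩ X).filter fun i => εstar < μ i).card : ℝ) <
          c * ((I.filter fun i => εstar < μ i).card : ℝ)) :=
  stmt3_general I μ hnn hsum X c hX φ hφ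
end

section
/- Let T be a finite set of nonnegative sequences indexed by [n], let Y be uniformly distributed on the m-element subsets of [n], and Y' uniformly distributed on the km-element subsets of [n] (k a positive integer, km ≤ n). Then E sup_{t∈T} Σ_{i∈Y'} t_i ≤ k · E sup_{t∈T} Σ_{i∈Y} t_i. -/
/-!
Fix a `K`-set `A` and a `t₀ ∈ T` attaining the supremum over `A`. Averaging the linear functional
`B ↦ ∑ i ∈ B, t₀ i` over the `m`-subsets `B ⊆ A` gives `(m / K) ∑ i ∈ A, t₀ i`, and each of these
sums is at most the supremum over `B`. Averaging over `A` as well, a uniform `m`-subset of a uniform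
`K`-subset is a uniform `m`-subset, so `m · E sup_{Y'} ≤ K · E sup_Y`; take `K = k m`.
-/

open Finset
open scoped BigOperators

variable {α : Type*}

theorem sum_powersetCard_sum_eq_choose_nsmul {M : Type*} [AddCommMonoid M] (A : Finset α)
    {m : ℕ} (hm : m ≠ 0) (f : α → M) :
    ∑ B ∈ A.powersetCard m, ∑ i ∈ B, f i = (#A - 1).choose (m - 1) • ∑ i ∈ A, f i := by
  classical
  rw [sum_comm' (t' := A) (s' := fun i => (A.powersetCard m).filter ({i} ⊆ ·)), smul_sum]
  · refine sum_congr rfl fun i hi => ?_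
    rw [sum_const, card_filter_powersetCard_subset _ _ _ (singleton_subset_iff.2 hi)
      (by rw [card_singleton]; omega), card_singleton]
  · intro B i
    simp only [mem_filter, mem_powersetCard, singleton_subset_iff]
    exact ⟨fun h => ⟨⟨h.1, h.2⟩, h.1.1 h.2⟩, fun h => ⟨h.1.1, h.1.2⟩⟩

theorem sum_powersetCard_sum_powersetCard_eq_choose_nsmul [Fintype α] {M : Type*}
    [AddCommMonoid M] {m K : ℕ} (hmK : m ≤ K) (g : Finset α → M) :
    ∑ A ∈ powersetCard K univ, ∑ B ∈ A.powersetCard m, g B =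
      (Fintype.card α - m).choose (K - m) • ∑ B ∈ powersetCard m univ, g B := by
  classical
  rw [sum_comm' (t' := powersetCard m univ)
    (s' := fun B => (powersetCard K univ).filter (B ⊆ ·)), smul_sum]
  · refine sum_congr rfl fun B hB => ?_
    rw [mem_powersetCard_univ] at hB
    rw [sum_const, card_filter_powersetCard_subset _ _ _ (subset_univ B) (hB ▸ hmK), hB,
      card_univ]
  · intro A B
    simp only [mem_filter, mem_powersetCard, subset_univ, true_and]
    exact ⟨fun h => ⟨⟨h.1, h.2.1⟩, h.2.2⟩, fun h => ⟨h.1.1, h.1.2, h.2⟩⟩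

section Field
variable {𝕜 : Type*} [Field 𝕜] [CharZero 𝕜]

theorem card_mul_expect_powersetCard_sum (A : Finset α) {m : ℕ} (hmA : m ≤ #A) (f : α → 𝕜) :
    (#A : 𝕜) * 𝔼 B ∈ A.powersetCard m, ∑ i ∈ B, f i = m * ∑ i ∈ A, f i := by
  obtain rfl | hm := eq_or_ne m 0
  · simp
  obtain ⟨K, hK⟩ : ∃ K, #A = K + 1 := Nat.exists_eq_succ_of_ne_zero (by omega)
  obtain ⟨l, rfl⟩ : ∃ l, m = l + 1 := Nat.exists_eq_succ_of_ne_zero hm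
  have hchoose : ((K + 1).choose (l + 1) : 𝕜) ≠ 0 := by
    exact_mod_cast (Nat.choose_pos (by omega)).ne'
  have hpascal : ((K + 1 : ℕ) * K.choose l : 𝕜) = (K + 1).choose (l + 1) * (l + 1 : ℕ) := by
    exact_mod_cast Nat.add_one_mul_choose_eq K l
  rw [expect_eq_sum_div_card, card_powersetCard, sum_powersetCard_sum_eq_choose_nsmul A hm,
    nsmul_eq_mul, hK, Nat.add_sub_cancel, Nat.add_sub_cancel]
  field_simp
  push_cast at hpascal ⊢
  linear_combination (∑ i ∈ A, f i) * hpascal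

theorem expect_powersetCard_expect_powersetCard [Fintype α] {m K : ℕ} (hmK : m ≤ K)
    (hK : K ≤ Fintype.card α) (g : Finset α → 𝕜) :
    𝔼 A ∈ powersetCard K univ, 𝔼 B ∈ A.powersetCard m, g B = 𝔼 B ∈ powersetCard m univ, g B := by
  set N := Fintype.card α
  have hcard : ∀ A ∈ powersetCard K (univ : Finset α),
      𝔼 B ∈ A.powersetCard m, g B = (∑ B ∈ A.powersetCard m, g B) / K.choose m := by
    intro A hA
    rw [expect_eq_sum_div_card, card_powersetCard, mem_powersetCard_univ.1 hA]
  have hpos : ∀ {a b : ℕ}, b ≤ a → (a.choose b : 𝕜) ≠ 0 := fun h =>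
    Nat.cast_ne_zero.2 (Nat.choose_pos h).ne'
  have hchoose : (N.choose K * K.choose m : 𝕜) = N.choose m * (N - m).choose (K - m) := by
    exact_mod_cast Nat.choose_mul hmK
  rw [expect_congr rfl hcard, ← expect_div, expect_eq_sum_div_card, expect_eq_sum_div_card,
    sum_powersetCard_sum_powersetCard_eq_choose_nsmul hmK, nsmul_eq_mul, card_powersetCard,
    card_powersetCard, card_univ, div_div, hchoose, mul_comm (N.choose m : 𝕜),
    mul_div_mul_left _ _ (hpos (Nat.sub_le_sub_right hK m))]

end Field

section LinearOrderedField
variable {𝕜 : Type*} [Field 𝕜] [LinearOrder 𝕜] [IsStrictOrderedRing 𝕜]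

theorem mul_sup'_sum_le_card_mul_expect_powersetCard (A : Finset α) {m : ℕ} (hmA : m ≤ #A)
    (T : Finset (α → 𝕜)) (hT : T.Nonempty) :
    m * T.sup' hT (fun t => ∑ i ∈ A, t i) ≤
      #A * 𝔼 B ∈ A.powersetCard m, T.sup' hT (fun t => ∑ i ∈ B, t i) := by
  obtain ⟨t₀, ht₀, hsup⟩ := exists_mem_eq_sup' hT (fun t => ∑ i ∈ A, t i)
  rw [hsup, ← card_mul_expect_powersetCard_sum A hmA]
  gcongr with B
  exact le_sup' (fun t => ∑ i ∈ B, t i) ht₀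

theorem mul_expect_sup'_sum_powersetCard_le [Fintype α] {m K : ℕ} (hmK : m ≤ K)
    (hK : K ≤ Fintype.card α) (T : Finset (α → 𝕜)) (hT : T.Nonempty) :
    m * 𝔼 A ∈ powersetCard K univ, T.sup' hT (fun t => ∑ i ∈ A, t i) ≤
      K * 𝔼 B ∈ powersetCard m univ, T.sup' hT (fun t => ∑ i ∈ B, t i) := by
  rw [← expect_powersetCard_expect_powersetCard hmK hK, mul_expect, mul_expect]
  refine expect_le_expect fun A hA => ?_
  rw [← mem_powersetCard_univ.1 hA]
  exact mul_sup'_sum_le_card_mul_expect_powersetCard A (mem_powersetCard_univ.1 hA ▸ hmK) T hT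

end LinearOrderedField

theorem stmt11_general (n m k : ℕ) (hk : 0 < k) (hkm : k * m ≤ n)
    (T : Finset (Fin n → ℝ)) (hT : T.Nonempty) :
    (1 / (n.choose (k * m) : ℝ)) *
        ∑ Y ∈ Finset.powersetCard (k * m) (Finset.univ : Finset (Fin n)),
          T.sup' hT (fun t => ∑ i ∈ Y, t i)
      ≤ (k : ℝ) *
        ((1 / (n.choose m : ℝ)) *
          ∑ Y ∈ Finset.powersetCard m (Finset.univ : Finset (Fin n)),
            T.sup' hT (fun t => ∑ i ∈ Y, t i)) := by
  obtain rfl | hm := Nat.eq_zero_or_pos m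
  · simp
  have h := mul_expect_sup'_sum_powersetCard_le (Nat.le_mul_of_pos_left m hk)
    (by rwa [Fintype.card_fin]) T hT
  simp only [expect_eq_sum_div_card, card_powersetCard, card_univ, Fintype.card_fin,
    Nat.cast_mul] at h
  rw [mul_comm (k : ℝ), mul_assoc] at h
  rw [one_div_mul_eq_div, one_div_mul_eq_div]
  exact le_of_mul_le_mul_left h (by exact_mod_cast hm)

theorem stmt11 (n m k : ℕ) (hk : 0 < k) (hkm : k * m ≤ n)
    (T : Finset (Fin n → ℝ)) (hT : T.Nonempty) (hpos : ∀ t ∈ T, ∀ i, 0 ≤ t i) :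
    (1 / (n.choose (k * m) : ℝ)) *
        ∑ Y ∈ Finset.powersetCard (k * m) (Finset.univ : Finset (Fin n)),
          T.sup' hT (fun t => ∑ i ∈ Y, t i)
      ≤ (k : ℝ) *
        ((1 / (n.choose m : ℝ)) *
          ∑ Y ∈ Finset.powersetCard m (Finset.univ : Finset (Fin n)),
            T.sup' hT (fun t => ∑ i ∈ Y, t i)) :=
  stmt11_general n m k hk hkm T hT
end

section
/- Assume the event {sup_{t∈T} Σ_i t_i δ'_i ≥ 221·δ'(T)} is Cp-small, where δ'_i are i.i.d. Bernoulli(Cp) obtained by writing δ_i = δ'_i δ''_i with δ''_i i.i.d. Bernoulli(1/C) independent of (δ'_j), and δ'(T) = E sup_{t∈T} Σ_i t_i δ'_i. Then δ'(T) ≤ C·δ(T) (by Jensen applied to E δ''_i = 1/C), and consequently the family {I ⊆ [n] : sup_{t∈T} Σ_{i∈I} t_i ≥ 221·C·δ(T)} is Cp-small. -/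
open Finset

/-- A family `F` of subsets of `[n]` is `p`-small if there is a finite family `G`
with `F ⊆ ⋃_{S ∈ G} ⟨S⟩` (up-sets) and `∑_{S ∈ G} p^|S| ≤ 1/2`. -/
def PSmall {n : ℕ} (p : ℝ) (F : Set (Finset (Fin n))) : Prop :=
  ∃ G : Finset (Finset (Fin n)),
    (∀ I ∈ F, ∃ S ∈ G, S ⊆ I) ∧ ∑ S ∈ G, p ^ S.card ≤ 1 / 2

/-- Expectation over independent Bernoulli(p) selectors `(δ_i)_{i < n}`. -/
noncomputable def selExp (n : ℕ) (p : ℝ) (f : Finset (Fin n) → ℝ) : ℝ :=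
  ∑ K ∈ (Finset.univ : Finset (Fin n)).powerset,
    p ^ K.card * (1 - p) ^ (n - K.card) * f K

/-!
Thinning: a Bernoulli(`Cp`) random subset, intersected with an independent Bernoulli(`1/C`)
random subset, is a Bernoulli(`p`) random subset. For a fixed `K`, the maximiser `t` of
`∑_{i ∈ K} t_i` still has expected sum `(1/C) ∑_{i ∈ K} t_i` on the thinned set `K ∩ K''`, so
`sup_t ∑_{i ∈ K} t_i ≤ C · E'' sup_t ∑_{i ∈ K ∩ K''} t_i`; averaging over `K` gives
`δ'(T) ≤ C δ(T)`. The smallness claim follows because its family is contained in the assumed one.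
-/

lemma PSmall.mono {n : ℕ} {p : ℝ} {F F' : Set (Finset (Fin n))} (h : PSmall p F')
    (hFF' : F ⊆ F') : PSmall p F := by
  obtain ⟨G, hcover, hsum⟩ := h
  exact ⟨G, fun I hI => hcover I (hFF' hI), hsum⟩

section BernoulliExp

variable {ι : Type*}

noncomputable def bernoulliExp (s : Finset ι) (r : ℝ) (f : Finset ι → ℝ) : ℝ :=
  ∑ K ∈ s.powerset, r ^ K.card * (1 - r) ^ (s.card - K.card) * f K

lemma selExp_eq_bernoulliExp (n : ℕ) (r : ℝ) (f : Finset (Fin n) → ℝ) :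
    selExp n r f = bernoulliExp univ r f := by
  simp only [selExp, bernoulliExp, card_univ, Fintype.card_fin]

variable {s : Finset ι} {r : ℝ}

lemma bernoulliExp_congr {f g : Finset ι → ℝ} (h : ∀ K ⊆ s, f K = g K) :
    bernoulliExp s r f = bernoulliExp s r g :=
  sum_congr rfl fun K hK => by rw [h K (mem_powerset.mp hK)]

lemma bernoulliExp_add (f g : Finset ι → ℝ) :
    bernoulliExp s r (fun K => f K + g K) = bernoulliExp s r f + bernoulliExp s r g := by
  simp only [bernoulliExp, mul_add, sum_add_distrib]

lemma bernoulliExp_const_mul (c : ℝ) (f : Finset ι → ℝ) :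
    bernoulliExp s r (fun K => c * f K) = c * bernoulliExp s r f := by
  simp only [bernoulliExp, mul_sum]
  exact sum_congr rfl fun K _ => by ring

lemma bernoulliExp_mono (hr0 : 0 ≤ r) (hr1 : r ≤ 1) {f g : Finset ι → ℝ}
    (h : ∀ K ⊆ s, f K ≤ g K) : bernoulliExp s r f ≤ bernoulliExp s r g := by
  have hr1' : 0 ≤ 1 - r := by linarith
  exact sum_le_sum fun K hK =>
    mul_le_mul_of_nonneg_left (h K (mem_powerset.mp hK)) (by positivity)

variable [DecidableEq ι]

lemma bernoulliExp_insert {i : ι} (hi : i ∉ s) (f : Finset ι → ℝ) :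
    bernoulliExp (insert i s) r f
      = (1 - r) * bernoulliExp s r f + r * bernoulliExp s r (fun K => f (insert i K)) := by
  rw [bernoulliExp, sum_powerset_insert hi, card_insert_of_notMem hi, bernoulliExp,
    bernoulliExp, mul_sum, mul_sum]
  congr 1
  · refine sum_congr rfl fun K hK => ?_
    have := card_le_card (mem_powerset.mp hK)
    rw [show s.card + 1 - K.card = (s.card - K.card) + 1 by omega]
    ring
  · refine sum_congr rfl fun K hK => ?_
    rw [card_insert_of_notMem fun h => hi (mem_powerset.mp hK h),
      show s.card + 1 - (K.card + 1) = s.card - K.card by omega]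
    ring

lemma bernoulliExp_const (c : ℝ) : bernoulliExp s r (fun _ => c) = c := by
  induction s using Finset.induction_on with
  | empty => simp [bernoulliExp]
  | insert i s hi ih => rw [bernoulliExp_insert hi, ih]; ring

lemma bernoulliExp_sum (t : ι → ℝ) :
    bernoulliExp s r (fun K => ∑ j ∈ K, t j) = r * ∑ j ∈ s, t j := by
  induction s using Finset.induction_on with
  | empty => simp [bernoulliExp]
  | insert i s hi ih =>
    have hsplit : bernoulliExp s r (fun K => ∑ j ∈ insert i K, t j)
        = t i + r * ∑ j ∈ s, t j := by
      rw [bernoulliExp_congr fun K hK => sum_insert fun h => hi (hK h),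
        bernoulliExp_add, bernoulliExp_const, ih]
    rw [bernoulliExp_insert hi, ih, hsplit, sum_insert hi]
    ring

lemma bernoulliExp_insert_of_forall_eq {i : ι} (hi : i ∉ s) {g : Finset ι → ℝ}
    (hg : ∀ K ⊆ s, g (insert i K) = g K) : bernoulliExp (insert i s) r g = bernoulliExp s r g := by
  rw [bernoulliExp_insert hi, bernoulliExp_congr hg]
  ring

lemma bernoulliExp_bernoulliExp_inter (a b : ℝ) (f : Finset ι → ℝ) :
    bernoulliExp s a (fun K' => bernoulliExp s b (fun K'' => f (K' ∩ K'')))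
      = bernoulliExp s (a * b) f := by
  induction s using Finset.induction_on generalizing f with
  | empty => simp [bernoulliExp]
  | insert i s hi ih =>
    have hout : ∀ K' ⊆ s, bernoulliExp (insert i s) b (fun K'' => f (K' ∩ K''))
        = bernoulliExp s b (fun K'' => f (K' ∩ K'')) := fun K' hK' =>
      bernoulliExp_insert_of_forall_eq hi fun K'' _ => by
        rw [inter_insert_of_notMem fun h => hi (hK' h)]
    have hin : ∀ K' ⊆ s, bernoulliExp (insert i s) b (fun K'' => f (insert i K' ∩ K''))
        = (1 - b) * bernoulliExp s b (fun K'' => f (K' ∩ K''))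
          + b * bernoulliExp s b (fun K'' => f (insert i (K' ∩ K''))) := fun K' _ => by
      rw [bernoulliExp_insert hi,
        bernoulliExp_congr (f := fun K'' => f (insert i K' ∩ K'')) fun K'' hK'' => by
          rw [insert_inter_of_notMem fun h => hi (hK'' h)],
        bernoulliExp_congr (f := fun K'' => f (insert i K' ∩ insert i K'')) fun K'' _ => by
          rw [← insert_inter_distrib]]
    rw [bernoulliExp_insert hi, bernoulliExp_insert hi, bernoulliExp_congr hout,
      bernoulliExp_congr hin, bernoulliExp_add, bernoulliExp_const_mul, bernoulliExp_const_mul,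
      ih, ih fun K => f (insert i K)]
    ring

end BernoulliExp

section Supremum

variable {ι : Type*} [DecidableEq ι] {s : Finset ι} {T : Finset (ι → ℝ)} (hT : T.Nonempty)

lemma sup'_sum_le_inv_mul_bernoulliExp {b : ℝ} (hb0 : 0 < b) (hb1 : b ≤ 1) {K : Finset ι}
    (hK : K ⊆ s) :
    T.sup' hT (fun t => ∑ i ∈ K, t i)
      ≤ b⁻¹ * bernoulliExp s b (fun K'' => T.sup' hT fun t => ∑ i ∈ K ∩ K'', t i) := by
  obtain ⟨t, ht, htsup⟩ := T.exists_mem_eq_sup' hT fun t => ∑ i ∈ K, t i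
  have hthin : bernoulliExp s b (fun K'' => ∑ i ∈ K ∩ K'', t i) = b * ∑ i ∈ K, t i := by
    rw [bernoulliExp_congr fun K'' _ => by rw [inter_comm, ← sum_ite_mem], bernoulliExp_sum,
      sum_ite_mem, inter_eq_right.mpr hK]
  calc T.sup' hT (fun t => ∑ i ∈ K, t i)
      = b⁻¹ * bernoulliExp s b (fun K'' => ∑ i ∈ K ∩ K'', t i) := by
        rw [htsup, hthin, inv_mul_cancel_left₀ hb0.ne']
    _ ≤ _ := mul_le_mul_of_nonneg_left
        (bernoulliExp_mono hb0.le hb1 fun K'' _ => le_sup' (fun t => ∑ i ∈ K ∩ K'', t i) ht)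
        (inv_nonneg.mpr hb0.le)

lemma bernoulliExp_sup'_sum_le {a b : ℝ} (ha0 : 0 ≤ a) (ha1 : a ≤ 1) (hb0 : 0 < b) (hb1 : b ≤ 1) :
    bernoulliExp s a (fun K => T.sup' hT fun t => ∑ i ∈ K, t i)
      ≤ b⁻¹ * bernoulliExp s (a * b) (fun K => T.sup' hT fun t => ∑ i ∈ K, t i) := by
  calc bernoulliExp s a (fun K => T.sup' hT fun t => ∑ i ∈ K, t i)
      ≤ bernoulliExp s a (fun K => b⁻¹ *
          bernoulliExp s b (fun K'' => T.sup' hT fun t => ∑ i ∈ K ∩ K'', t i)) :=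
        bernoulliExp_mono ha0 ha1 fun K hK => sup'_sum_le_inv_mul_bernoulliExp hT hb0 hb1 hK
    _ = _ := by
        rw [bernoulliExp_const_mul,
          bernoulliExp_bernoulliExp_inter a b fun K => T.sup' hT fun t => ∑ i ∈ K, t i]

end Supremum

theorem stmt18_general (n : ℕ) (T : Finset (Fin n → ℝ)) (hT : T.Nonempty)
    (p C : ℝ) (hp0 : 0 < p) (hC : 1 < C) (hCp : C * p < 1)
    (δT δT' : ℝ)
    (hδ : δT = selExp n p (fun K => T.sup' hT fun t => ∑ i ∈ K, t i))
    (hδ' : δT' = selExp n (C * p) (fun K => T.sup' hT fun t => ∑ i ∈ K, t i))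
    (hsmall : PSmall (C * p)
      {I : Finset (Fin n) | 221 * δT' ≤ T.sup' hT fun t => ∑ i ∈ I, t i}) :
    δT' ≤ C * δT ∧
      PSmall (C * p)
        {I : Finset (Fin n) | 221 * C * δT ≤ T.sup' hT fun t => ∑ i ∈ I, t i} := by
  have hC0 : 0 < C := by linarith
  have hcomp : δT' ≤ C * δT := by
    have h := bernoulliExp_sup'_sum_le (s := univ) hT (a := C * p) (b := C⁻¹) (by positivity)
      hCp.le (by positivity) (inv_le_one_of_one_le₀ hC.le)
    rwa [inv_inv, mul_right_comm, mul_inv_cancel₀ hC0.ne', one_mul, ← selExp_eq_bernoulliExp,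
      ← selExp_eq_bernoulliExp, ← hδ, ← hδ'] at h
  refine ⟨hcomp, hsmall.mono fun I hI => ?_⟩
  have hI : 221 * C * δT ≤ T.sup' hT fun t => ∑ i ∈ I, t i := hI
  show 221 * δT' ≤ _
  linarith

theorem stmt18 (n : ℕ) (T : Finset (Fin n → ℝ)) (hT : T.Nonempty)
    (hpos : ∀ t ∈ T, ∀ i, 0 ≤ t i)
    (p C : ℝ) (hp0 : 0 < p) (hC : 1 < C) (hCp : C * p < 1)
    (δT δT' : ℝ)
    (hδ : δT = selExp n p (fun K => T.sup' hT fun t => ∑ i ∈ K, t i))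
    (hδ' : δT' = selExp n (C * p) (fun K => T.sup' hT fun t => ∑ i ∈ K, t i))
    (hsmall : PSmall (C * p)
      {I : Finset (Fin n) | 221 * δT' ≤ T.sup' hT fun t => ∑ i ∈ I, t i}) :
    δT' ≤ C * δT ∧
      PSmall (C * p)
        {I : Finset (Fin n) | 221 * C * δT ≤ T.sup' hT fun t => ∑ i ∈ I, t i} :=
  stmt18_general n T hT p C hp0 hC hCp δT δT' hδ hδ' hsmall
end
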